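/- Let f be a C² solution on an interval of the equation (p-1)f'²(f''+f') + (p-3)(f'² sin f cos f + f' sin²f) − f'³ + (f''+f') sin²f − sin³f cos f = 0 with p > 1, and suppose f(t) ∈ (0,π) for all t. Define w(t) := cot(f(t)). Then w satisfies w'' = (1+w²+w'²)(2(p-1)ww' + (2-p)(1+w²))w' / ((1+w²)(1+w²+(p-1)w'²)) − w. -/

import Mathlib

/-! Write `s = sin f`, `c = cos f`. For `w = cot f` one has `w' = -f'/s²`,
`w'' = (2 s c f'² - f'' s²)/s⁴` and `1 + w² = 1/s²`. After these substitutions and clearing the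
denominator `s² (s² + (p-1) f'²)`, nonzero since `p > 1`, the claimed equation for `w` is `-s`
times the autonomous equation for `f`. -/

open Real

/-- `f` solves the autonomous (logarithmic-variable) equation on `S`. -/
def SolvesAuto (p : ℝ) (f : ℝ → ℝ) (S : Set ℝ) : Prop :=
  ∀ t ∈ S,
    (p - 1) * (deriv f t) ^ 2 * (deriv (deriv f) t + deriv f t) +
      (p - 3) * ((deriv f t) ^ 2 * Real.sin (f t) * Real.cos (f t) +
        deriv f t * (Real.sin (f t)) ^ 2) -
      (deriv f t) ^ 3 + (deriv (deriv f) t + deriv f t) * (Real.sin (f t)) ^ 2 -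
      (Real.sin (f t)) ^ 3 * Real.cos (f t) = 0

theorem hasDerivAt_cot_comp {f : ℝ → ℝ} {f' x : ℝ} (hf : HasDerivAt f f' x)
    (hs : sin (f x) ≠ 0) :
    HasDerivAt (fun t => cos (f t) / sin (f t)) (-f' / sin (f x) ^ 2) x := by
  refine (hf.cos.fun_div hf.sin hs).congr_deriv ?_
  field_simp
  linear_combination -f' * sin_sq_add_cos_sq (f x)

theorem hasDerivAt_deriv_cot_comp {f : ℝ → ℝ} {U : Set ℝ} {x A : ℝ} (hU : IsOpen U)
    (hx : x ∈ U) (hf : DifferentiableOn ℝ f U) (hs : ∀ y ∈ U, sin (f y) ≠ 0)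
    (hA : HasDerivAt (deriv f) A x) :
    HasDerivAt (deriv fun t => cos (f t) / sin (f t))
      ((2 * sin (f x) * cos (f x) * deriv f x ^ 2 - A * sin (f x) ^ 2) / sin (f x) ^ 4) x := by
  have hf_at : ∀ y ∈ U, HasDerivAt f (deriv f y) y := fun y hy =>
    (hf.differentiableAt (hU.mem_nhds hy)).hasDerivAt
  have hderiv : (deriv fun t => cos (f t) / sin (f t)) =ᶠ[nhds x]
      fun y => -deriv f y / sin (f y) ^ 2 := by
    filter_upwards [hU.mem_nhds hx] with y hy
    exact (hasDerivAt_cot_comp (hf_at y hy) (hs y hy)).deriv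
  have hsin_sq :
      HasDerivAt (fun y => sin (f y) ^ 2) (2 * sin (f x) * (cos (f x) * deriv f x)) x := by
    simpa using (hf_at x hx).sin.fun_pow 2
  refine HasDerivAt.congr_of_eventuallyEq ?_ hderiv
  refine (hA.fun_neg.fun_div hsin_sq (pow_ne_zero 2 (hs x hx))).congr_deriv ?_
  ring

theorem cot_second_order_identity (p s c v A : ℝ) (hs : s ≠ 0) (hpy : s ^ 2 + c ^ 2 = 1)
    (hd : s ^ 2 + (p - 1) * v ^ 2 ≠ 0)
    (hode : (p - 1) * v ^ 2 * (A + v) + (p - 3) * (v ^ 2 * s * c + v * s ^ 2) - v ^ 3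
      + (A + v) * s ^ 2 - s ^ 3 * c = 0) :
    (2 * s * c * v ^ 2 - A * s ^ 2) / s ^ 4 =
      (1 + (c / s) ^ 2 + (-v / s ^ 2) ^ 2) *
        (2 * (p - 1) * (c / s) * (-v / s ^ 2) + (2 - p) * (1 + (c / s) ^ 2)) * (-v / s ^ 2) /
        ((1 + (c / s) ^ 2) * (1 + (c / s) ^ 2 + (p - 1) * (-v / s ^ 2) ^ 2)) - c / s := by
  have hcot_sq : 1 + (c / s) ^ 2 = 1 / s ^ 2 := by field_simp; linarith
  have hd' : s ^ 2 + v ^ 2 * (p - 1) ≠ 0 := by rwa [mul_comm]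
  rw [hcot_sq]
  field_simp
  linear_combination (-s) * hode

/-- If `f` solves the autonomous equation with values in `(0,π)`, then
`w = cot ∘ f` satisfies the algebraic second-order equation \eqref{ODE3}. -/
theorem stmt13 (p a b : ℝ) (hp : 1 < p) (f : ℝ → ℝ)
    (hreg : ContDiffOn ℝ 2 f (Set.Ioo a b))
    (hrange : ∀ t ∈ Set.Ioo a b, f t ∈ Set.Ioo 0 π)
    (hsol : SolvesAuto p f (Set.Ioo a b))
    (w : ℝ → ℝ) (hw : w = fun t => Real.cos (f t) / Real.sin (f t)) :
    ∀ t ∈ Set.Ioo a b,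
      deriv (deriv w) t =
        (1 + (w t) ^ 2 + (deriv w t) ^ 2) *
          (2 * (p - 1) * w t * deriv w t + (2 - p) * (1 + (w t) ^ 2)) * deriv w t /
          ((1 + (w t) ^ 2) * (1 + (w t) ^ 2 + (p - 1) * (deriv w t) ^ 2)) - w t := by
  intro t ht
  subst hw
  have hU : IsOpen (Set.Ioo a b) := isOpen_Ioo
  have hf : DifferentiableOn ℝ f (Set.Ioo a b) := hreg.differentiableOn (by norm_num)
  have hs : ∀ y ∈ Set.Ioo a b, sin (f y) ≠ 0 := fun y hy =>
    (sin_pos_of_pos_of_lt_pi (hrange y hy).1 (hrange y hy).2).ne'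
  have hf' : ContDiffOn ℝ 1 (deriv f) (Set.Ioo a b) := hreg.deriv_of_isOpen hU (by norm_num)
  have hf'' : HasDerivAt (deriv f) (deriv (deriv f) t) t :=
    ((hf'.differentiableOn (by norm_num)).differentiableAt (hU.mem_nhds ht)).hasDerivAt
  have hd : sin (f t) ^ 2 + (p - 1) * deriv f t ^ 2 ≠ 0 := by
    have := hs t ht
    positivity [sub_pos.mpr hp]
  rw [(hasDerivAt_deriv_cot_comp hU ht hf hs hf'').deriv,
    (hasDerivAt_cot_comp ((hf.differentiableAt (hU.mem_nhds ht)).hasDerivAt) (hs t ht)).deriv]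
  exact cot_second_order_identity p _ _ _ _ (hs t ht) (sin_sq_add_cos_sq _) hd (hsol t ht)
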